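/- Suppose Assumption (Bayes boundary) holds, φ : ℝ → ℝ is strictly concave, strictly increasing, and differentiable at 0 with φ'(0) > 0, E[sup_{b∈B}(|φ(X·b)| + |φ(−X·b)|)] < ∞, B = {b ∈ ℝ^d : ‖b‖ ≤ R} for some R ∈ (0,∞), and for every nonzero v ∈ ℝ^d, P(X·v ≠ 0) > 0. Then there exists a unique maximizer b_φ of Q_φ over B. If in addition (T1) for any b₁, b₂ ∈ B that are not parallel, P(1{X·b₁ ≥ 0} ≠ 1{X·b₂ ≥ 0}) > 0, and (T2) 1{X·b_φ ≥ 0} = 1{η(X) ≥ 1/2} almost surely, then there exists a scalar c > 0 such that b_φ = c·b₀, and b_φ is a maximizer of the maximum score objective Q₀ over B. -/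

import Mathlib

open MeasureTheory
open scoped RealInnerProductSpace

/-- The maximum score objective `Q₀(b) = E[Y·1{X·b ≥ 0} + (1−Y)·1{X·b < 0}]`. -/
noncomputable def Q0 {Ω : Type*} [MeasurableSpace Ω] (P : Measure Ω) {d : ℕ}
    (X : Ω → EuclideanSpace ℝ (Fin d)) (Y : Ω → ℝ)
    (b : EuclideanSpace ℝ (Fin d)) : ℝ :=
  ∫ ω, (Y ω * (if 0 ≤ ⟪X ω, b⟫ then (1 : ℝ) else 0)
      + (1 - Y ω) * (if ⟪X ω, b⟫ < 0 then (1 : ℝ) else 0)) ∂P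

/-- The surrogate objective `Q_φ(b) = E[Y·φ(X·b) + (1−Y)·φ(−X·b)]`. -/
noncomputable def Qphi {Ω : Type*} [MeasurableSpace Ω] (P : Measure Ω) {d : ℕ}
    (X : Ω → EuclideanSpace ℝ (Fin d)) (Y : Ω → ℝ) (φ : ℝ → ℝ)
    (b : EuclideanSpace ℝ (Fin d)) : ℝ :=
  ∫ ω, (Y ω * φ (⟪X ω, b⟫) + (1 - Y ω) * φ (-⟪X ω, b⟫)) ∂P

/-- Two vectors are parallel if one is a scalar multiple of the other. -/
def Parallel {d : ℕ} (b₁ b₂ : EuclideanSpace ℝ (Fin d)) : Prop :=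
  (∃ c : ℝ, b₁ = c • b₂) ∨ (∃ c : ℝ, b₂ = c • b₁)

/-!
For `Y ∈ {0,1}` the integrand of `Q_φ` is `φ(±X·b)`, a strictly concave function of `b` along
every direction `v` with `X·v ≠ 0`; since `X·v ≠ 0` with positive probability for every `v ≠ 0`,
`Q_φ` is strictly concave on the ball `B`, and dominated convergence makes it continuous, so it has
exactly one maximizer on the compact set `B`.

For identification, (T2) and the Bayes boundary make the sign patterns of `X·b_φ` and `X·b₀` agree
almost surely, so (T1) forces `b_φ` and `b₀` to be parallel; a point where `X·b₀ < 0` fixes the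
sign of the factor. Finally `Q₀` only sees the sign pattern, and
`Q₀(b) = E[η(X); X·b ≥ 0] + E[1 − η(X); X·b < 0]` is maximized pointwise by the Bayes sign
pattern of `b₀`.
-/

open Set

theorem IsCompact.le_biSup {α β : Type*} [TopologicalSpace α] [ConditionallyCompleteLinearOrder β]
    [TopologicalSpace β] [OrderClosedTopology β] {s : Set α} {f : α → β}
    (hs : IsCompact s) (hf : ContinuousOn f s) {a : α} (ha : a ∈ s) : f a ≤ ⨆ x ∈ s, f x := by
  refine le_ciSup₂ (f := fun x (_ : x ∈ s) => f x) ((hs.bddAbove_image hf).mono ?_) a ha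
  rintro _ ⟨_, ⟨x, rfl⟩, ⟨hx, rfl⟩⟩
  exact ⟨x, hx, rfl⟩

theorem IsCompact.existsUnique_isMaxOn_of_strictConcaveOn {E : Type*} [TopologicalSpace E]
    [AddCommGroup E] [Module ℝ E] {s : Set E} {f : E → ℝ} (hs : IsCompact s) (hne : s.Nonempty)
    (hf : ContinuousOn f s) (hfc : StrictConcaveOn ℝ s f) : ∃! a, a ∈ s ∧ IsMaxOn f s a := by
  obtain ⟨a, ha, hmax⟩ := hs.exists_isMaxOn hne hf
  exact ⟨a, ⟨ha, hmax⟩, fun y ⟨hy, hymax⟩ => hfc.eq_of_isMaxOn hymax hmax hy ha⟩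

def surrogateLoss (φ : ℝ → ℝ) (y t : ℝ) : ℝ := y * φ t + (1 - y) * φ (-t)

section surrogateLoss

variable {φ : ℝ → ℝ} {y : ℝ}

theorem surrogateLoss_eq_ite (hy : y = 0 ∨ y = 1) (t : ℝ) :
    surrogateLoss φ y t = if y = 1 then φ t else φ (-t) := by
  rcases hy with rfl | rfl <;> simp [surrogateLoss]

theorem abs_surrogateLoss_le (hy : y = 0 ∨ y = 1) (t : ℝ) :
    |surrogateLoss φ y t| ≤ |φ t| + |φ (-t)| := by
  rw [surrogateLoss_eq_ite hy]
  split_ifs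
  · exact le_add_of_nonneg_right (abs_nonneg _)
  · exact le_add_of_nonneg_left (abs_nonneg _)

theorem strictConcaveOn_surrogateLoss (hφ : StrictConcaveOn ℝ univ φ) (hy : y = 0 ∨ y = 1) :
    StrictConcaveOn ℝ univ (surrogateLoss φ y) := by
  refine ⟨convex_univ, fun t₁ _ t₂ _ hne a b ha hb hab => ?_⟩
  simp only [surrogateLoss_eq_ite hy]
  split_ifs
  · exact hφ.2 trivial trivial hne ha hb hab
  · have := hφ.2 trivial trivial (neg_injective.ne hne) ha hb hab
    rwa [smul_neg, smul_neg, ← neg_add] at this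

end surrogateLoss

section surrogateObjective

variable {Ω : Type*} [MeasurableSpace Ω] {P : Measure Ω} {d : ℕ}
  {X : Ω → EuclideanSpace ℝ (Fin d)} {Y : Ω → ℝ} {φ : ℝ → ℝ}
  {B : Set (EuclideanSpace ℝ (Fin d))} {env : Ω → ℝ}

theorem integral_lt_integral_of_le_of_lt_on {f g : Ω → ℝ} (hf : Integrable f P)
    (hg : Integrable g P) (hle : ∀ ω, f ω ≤ g ω) {s : Set Ω} (hs : 0 < P s)
    (hlt : ∀ ω ∈ s, f ω < g ω) : ∫ ω, f ω ∂P < ∫ ω, g ω ∂P := by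
  have hsupp : s ⊆ Function.support (g - f) := fun ω hω => (sub_pos.2 (hlt ω hω)).ne'
  have := (integral_pos_iff_support_of_nonneg (fun ω => sub_nonneg.2 (hle ω)) (hg.sub hf)).2
    (hs.trans_le (measure_mono hsupp))
  rw [integral_sub hg hf] at this
  linarith

theorem measurable_surrogateLoss (hX : Measurable X) (hY : Measurable Y) (hφ : Continuous φ)
    (b : EuclideanSpace ℝ (Fin d)) : Measurable fun ω => surrogateLoss φ (Y ω) ⟪X ω, b⟫ := by
  unfold surrogateLoss
  have := hφ.measurable
  fun_prop

theorem integrable_surrogateLoss (hX : Measurable X) (hY : Measurable Y) (hφ : Continuous φ)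
    (hY01 : ∀ ω, Y ω = 0 ∨ Y ω = 1) (henv : Integrable env P)
    (hdom : ∀ b ∈ B, ∀ ω, |φ ⟪X ω, b⟫| + |φ (-⟪X ω, b⟫)| ≤ env ω) {b : EuclideanSpace ℝ (Fin d)}
    (hb : b ∈ B) : Integrable (fun ω => surrogateLoss φ (Y ω) ⟪X ω, b⟫) P :=
  henv.mono' (measurable_surrogateLoss hX hY hφ b).aestronglyMeasurable
    (ae_of_all _ fun ω => (abs_surrogateLoss_le (hY01 ω) _).trans (hdom b hb ω))

theorem Qphi_continuousOn (hX : Measurable X) (hY : Measurable Y) (hφ : Continuous φ)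
    (hY01 : ∀ ω, Y ω = 0 ∨ Y ω = 1) (henv : Integrable env P)
    (hdom : ∀ b ∈ B, ∀ ω, |φ ⟪X ω, b⟫| + |φ (-⟪X ω, b⟫)| ≤ env ω) :
    ContinuousOn (Qphi P X Y φ) B := by
  refine continuousOn_of_dominated
    (fun b _ => (measurable_surrogateLoss hX hY hφ b).aestronglyMeasurable)
    (fun b hb => ae_of_all _ fun ω => (abs_surrogateLoss_le (hY01 ω) _).trans (hdom b hb ω))
    henv (ae_of_all _ fun ω => Continuous.continuousOn ?_)
  fun_prop

theorem Qphi_strictConcaveOn (hφ : StrictConcaveOn ℝ univ φ) (hY01 : ∀ ω, Y ω = 0 ∨ Y ω = 1)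
    (hB : Convex ℝ B)
    (hint : ∀ b ∈ B, Integrable (fun ω => surrogateLoss φ (Y ω) ⟪X ω, b⟫) P)
    (hndeg : ∀ v : EuclideanSpace ℝ (Fin d), v ≠ 0 → 0 < P {ω | ⟪X ω, v⟫ ≠ 0}) :
    StrictConcaveOn ℝ B (Qphi P X Y φ) := by
  refine ⟨hB, fun b₁ hb₁ b₂ hb₂ hne a c ha hc hac => ?_⟩
  set L : EuclideanSpace ℝ (Fin d) → Ω → ℝ := fun b ω => surrogateLoss φ (Y ω) ⟪X ω, b⟫
  have hinner : ∀ ω, ⟪X ω, a • b₁ + c • b₂⟫ = a * ⟪X ω, b₁⟫ + c * ⟪X ω, b₂⟫ := fun ω => by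
    rw [inner_add_right, real_inner_smul_right, real_inner_smul_right]
  have hle : ∀ ω, a * L b₁ ω + c * L b₂ ω ≤ L (a • b₁ + c • b₂) ω := fun ω => by
    simpa only [L, hinner, smul_eq_mul] using (strictConcaveOn_surrogateLoss hφ (hY01 ω)).concaveOn.2
      (mem_univ ⟪X ω, b₁⟫) (mem_univ ⟪X ω, b₂⟫) ha.le hc.le hac
  have hlt : ∀ ω ∈ {ω | ⟪X ω, b₁ - b₂⟫ ≠ 0},
      a * L b₁ ω + c * L b₂ ω < L (a • b₁ + c • b₂) ω := fun ω hω => by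
    have hne' : ⟪X ω, b₁⟫ ≠ ⟪X ω, b₂⟫ := fun h => hω (by rw [inner_sub_right, h, sub_self])
    simpa only [L, hinner, smul_eq_mul] using
      (strictConcaveOn_surrogateLoss hφ (hY01 ω)).2 trivial trivial hne' ha hc hac
  calc a • Qphi P X Y φ b₁ + c • Qphi P X Y φ b₂ = ∫ ω, a * L b₁ ω + c * L b₂ ω ∂P := by
        rw [integral_add ((hint b₁ hb₁).const_mul a) ((hint b₂ hb₂).const_mul c),
          integral_const_mul, integral_const_mul]
        rfl
    _ < Qphi P X Y φ (a • b₁ + c • b₂) :=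
        integral_lt_integral_of_le_of_lt_on
          (((hint b₁ hb₁).const_mul a).add ((hint b₂ hb₂).const_mul c))
          (hint _ (hB hb₁ hb₂ ha.le hc.le hac)) hle (hndeg _ (sub_ne_zero.2 hne)) hlt

end surrogateObjective

theorem Parallel.exists_eq_smul {d : ℕ} {b₁ b₂ : EuclideanSpace ℝ (Fin d)} (h : Parallel b₁ b₂)
    (hb₂ : b₂ ≠ 0) : ∃ c : ℝ, b₁ = c • b₂ := by
  rcases h with h | ⟨c, rfl⟩
  · exact h
  · have hc : c ≠ 0 := by
      rintro rfl
      exact hb₂ (zero_smul ℝ b₁)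
    exact ⟨c⁻¹, by rw [smul_smul, inv_mul_cancel₀ hc, one_smul]⟩

section signPattern

variable {Ω : Type*} [MeasurableSpace Ω] {P : Measure Ω} {d : ℕ}
  {X : Ω → EuclideanSpace ℝ (Fin d)} {b : EuclideanSpace ℝ (Fin d)}

theorem ne_zero_of_measure_inner_neg_pos (h : 0 < P {ω | ⟪X ω, b⟫ < 0}) : b ≠ 0 := by
  rintro rfl
  simp at h

theorem pos_of_ae_sign_smul_iff (h : 0 < P {ω | ⟪X ω, b⟫ < 0}) {c : ℝ}
    (hsign : ∀ᵐ ω ∂P, (0 ≤ ⟪X ω, c • b⟫ ↔ 0 ≤ ⟪X ω, b⟫)) : 0 < c := by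
  obtain ⟨ω, hneg : ⟪X ω, b⟫ < 0, hω⟩ :=
    Measure.exists_mem_of_measure_ne_zero_of_ae h.ne' (ae_restrict_of_ae hsign)
  rw [real_inner_smul_right] at hω
  have : c * ⟪X ω, b⟫ < 0 := not_le.1 fun h' => (not_le.2 hneg) (hω.1 h')
  nlinarith

end signPattern

theorem ite_le_ite_of_half_le_iff {p q : Prop} [Decidable p] [Decidable q] {e : ℝ}
    (h : 1 / 2 ≤ e ↔ q) : (if p then e else 1 - e) ≤ (if q then e else 1 - e) := by
  split_ifs with hp hq hq
  · exact le_rfl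
  · linarith [not_le.1 (mt h.1 hq)]
  · linarith [h.2 hq]
  · exact le_rfl

section maximumScore

variable {Ω : Type*} [MeasurableSpace Ω] {P : Measure Ω} {d : ℕ}
  {X : Ω → EuclideanSpace ℝ (Fin d)} {Y : Ω → ℝ} {η : EuclideanSpace ℝ (Fin d) → ℝ}

theorem Q0_eq_integral_ite (b : EuclideanSpace ℝ (Fin d)) :
    Q0 P X Y b = ∫ ω, (if 0 ≤ ⟪X ω, b⟫ then Y ω else 1 - Y ω) ∂P := by
  refine integral_congr_ae (ae_of_all _ fun ω => ?_)
  simp only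
  split_ifs <;> linarith

theorem Q0_congr_ae {b b' : EuclideanSpace ℝ (Fin d)}
    (h : ∀ᵐ ω ∂P, (0 ≤ ⟪X ω, b⟫ ↔ 0 ≤ ⟪X ω, b'⟫)) : Q0 P X Y b = Q0 P X Y b' := by
  rw [Q0_eq_integral_ite, Q0_eq_integral_ite]
  refine integral_congr_ae (h.mono fun ω hω => ?_)
  simp only [hω]

theorem Q0_eq_integral_condProb [IsFiniteMeasure P] (hX : Measurable X) (hY : Measurable Y)
    (hY01 : ∀ ω, Y ω = 0 ∨ Y ω = 1) (hη : Measurable η) (hη01 : ∀ x, η x ∈ Icc (0 : ℝ) 1)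
    (hcond : ∀ g : EuclideanSpace ℝ (Fin d) → ℝ, Measurable g → (∃ C, ∀ x, |g x| ≤ C) →
      ∫ ω, Y ω * g (X ω) ∂P = ∫ ω, η (X ω) * g (X ω) ∂P)
    (b : EuclideanSpace ℝ (Fin d)) :
    Q0 P X Y b = ∫ ω, (if 0 ≤ ⟪X ω, b⟫ then η (X ω) else 1 - η (X ω)) ∂P := by
  set g : EuclideanSpace ℝ (Fin d) → ℝ := fun x => if 0 ≤ ⟪x, b⟫ then 1 else -1
  have hpos : MeasurableSet {x : EuclideanSpace ℝ (Fin d) | 0 ≤ ⟪x, b⟫} :=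
    measurableSet_le measurable_const (by fun_prop)
  have hg : Measurable g := Measurable.ite hpos measurable_const measurable_const
  have hg1 : ∀ x, |g x| ≤ 1 := fun x => by simp only [g]; split_ifs <;> simp
  -- `if p then z else 1 - z = z * g + 1{¬p}` isolates the only term to which `hcond` applies.
  have hsplit : ∀ Z : Ω → ℝ, Measurable Z → (∀ ω, |Z ω| ≤ 1) →
      ∫ ω, (if 0 ≤ ⟪X ω, b⟫ then Z ω else 1 - Z ω) ∂P
        = ∫ ω, Z ω * g (X ω) ∂P + ∫ ω, (if 0 ≤ ⟪X ω, b⟫ then 0 else 1 : ℝ) ∂P := by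
    intro Z hZ hZ1
    rw [← integral_add]
    · congr 1
      funext ω
      simp only [g]
      split_ifs <;> ring
    · refine .of_bound (hZ.mul (hg.comp hX)).aestronglyMeasurable 1 (ae_of_all _ fun ω => ?_)
      rw [Real.norm_eq_abs, abs_mul]
      exact mul_le_one₀ (hZ1 ω) (abs_nonneg _) (hg1 (X ω))
    · refine .of_bound (Measurable.ite (hX hpos) measurable_const
        measurable_const).aestronglyMeasurable 1 (ae_of_all _ fun ω => ?_)
      split_ifs <;> simp
  have hY1 : ∀ ω, |Y ω| ≤ 1 := fun ω => by rcases hY01 ω with h | h <;> simp [h]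
  have hη1 : ∀ ω, |η (X ω)| ≤ 1 := fun ω => abs_le.2 ⟨by linarith [(hη01 (X ω)).1], (hη01 (X ω)).2⟩
  rw [Q0_eq_integral_ite, hsplit Y hY hY1, hcond g hg ⟨1, hg1⟩,
    hsplit (fun ω => η (X ω)) (hη.comp hX) hη1]

theorem Q0_le_of_bayes [IsFiniteMeasure P] (hX : Measurable X) (hY : Measurable Y)
    (hY01 : ∀ ω, Y ω = 0 ∨ Y ω = 1) (hη : Measurable η) (hη01 : ∀ x, η x ∈ Icc (0 : ℝ) 1)
    (hcond : ∀ g : EuclideanSpace ℝ (Fin d) → ℝ, Measurable g → (∃ C, ∀ x, |g x| ≤ C) →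
      ∫ ω, Y ω * g (X ω) ∂P = ∫ ω, η (X ω) * g (X ω) ∂P)
    {b₀ : EuclideanSpace ℝ (Fin d)} (hBayes : ∀ᵐ ω ∂P, ((1 : ℝ) / 2 ≤ η (X ω) ↔ 0 ≤ ⟪X ω, b₀⟫))
    (b : EuclideanSpace ℝ (Fin d)) : Q0 P X Y b ≤ Q0 P X Y b₀ := by
  have hint : ∀ b : EuclideanSpace ℝ (Fin d),
      Integrable (fun ω => if 0 ≤ ⟪X ω, b⟫ then η (X ω) else 1 - η (X ω)) P := fun b => by
    refine .of_bound (Measurable.ite (measurableSet_le measurable_const (by fun_prop))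
      (hη.comp hX) (measurable_const.sub (hη.comp hX))).aestronglyMeasurable 1
      (ae_of_all _ fun ω => ?_)
    have := hη01 (X ω)
    split_ifs <;> rw [Real.norm_eq_abs, abs_le] <;> constructor <;> linarith [this.1, this.2]
  rw [Q0_eq_integral_condProb hX hY hY01 hη hη01 hcond,
    Q0_eq_integral_condProb hX hY hY01 hη hη01 hcond]
  refine integral_mono_ae (hint b) (hint b₀) (hBayes.mono fun ω hω => ?_)
  exact ite_le_ite_of_half_le_iff hω

end maximumScore

theorem main_identification_theorem_general
    {Ω : Type*} [MeasurableSpace Ω] (P : Measure Ω) [IsProbabilityMeasure P]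
    {d : ℕ} (X : Ω → EuclideanSpace ℝ (Fin d)) (Y : Ω → ℝ)
    (η : EuclideanSpace ℝ (Fin d) → ℝ)
    (hX : Measurable X) (hY : Measurable Y) (hY01 : ∀ ω, Y ω = 0 ∨ Y ω = 1)
    (hη : Measurable η) (hη01 : ∀ x, η x ∈ Set.Icc (0 : ℝ) 1)
    (hcond : ∀ g : EuclideanSpace ℝ (Fin d) → ℝ, Measurable g → (∃ C, ∀ x, |g x| ≤ C) →
      ∫ ω, Y ω * g (X ω) ∂P = ∫ ω, η (X ω) * g (X ω) ∂P)
    (B : Set (EuclideanSpace ℝ (Fin d))) (hBne : B.Nonempty) (hBcpt : IsCompact B)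
    (b₀ : EuclideanSpace ℝ (Fin d)) (hb₀B : b₀ ∈ B)
    -- Assumption (Bayes boundary)
    (hBayes₁ : ∀ᵐ ω ∂P, ((1 : ℝ) / 2 ≤ η (X ω) ↔ 0 ≤ ⟪X ω, b₀⟫))
    (hBayes₂' : 0 < P {ω | ⟪X ω, b₀⟫ < 0})
    -- Assumption (surrogate score function)
    (φ : ℝ → ℝ) (hφconc : StrictConcaveOn ℝ Set.univ φ)
    -- regularity conditions
    (henv : Integrable (fun ω => ⨆ b ∈ B, (|φ (⟪X ω, b⟫)| + |φ (-⟪X ω, b⟫)|)) P)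
    (R : ℝ) (hBball : B = Metric.closedBall (0 : EuclideanSpace ℝ (Fin d)) R)
    (hndeg : ∀ v : EuclideanSpace ℝ (Fin d), v ≠ 0 → 0 < P {ω | ⟪X ω, v⟫ ≠ 0}) :
    (∃! bφ, bφ ∈ B ∧ ∀ b ∈ B, Qphi P X Y φ b ≤ Qphi P X Y φ bφ) ∧
    (∀ bφ ∈ B, (∀ b ∈ B, Qphi P X Y φ b ≤ Qphi P X Y φ bφ) →
      -- (T1)
      (∀ b₁ ∈ B, ∀ b₂ ∈ B, ¬ Parallel b₁ b₂ →
        0 < P {ω | ¬ ((0 ≤ ⟪X ω, b₁⟫) ↔ (0 ≤ ⟪X ω, b₂⟫))}) →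
      -- (T2)
      (∀ᵐ ω ∂P, ((0 ≤ ⟪X ω, bφ⟫) ↔ ((1 : ℝ) / 2 ≤ η (X ω)))) →
      (∃ c : ℝ, 0 < c ∧ bφ = c • b₀) ∧ (∀ b ∈ B, Q0 P X Y b ≤ Q0 P X Y bφ)) := by
  have hφ : Continuous φ := continuousOn_univ.1 (hφconc.concaveOn.continuousOn isOpen_univ)
  have hdom : ∀ b ∈ B, ∀ ω, |φ ⟪X ω, b⟫| + |φ (-⟪X ω, b⟫)|
      ≤ ⨆ b ∈ B, (|φ (⟪X ω, b⟫)| + |φ (-⟪X ω, b⟫)|) :=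
    fun b hb ω => hBcpt.le_biSup (f := fun b => |φ ⟪X ω, b⟫| + |φ (-⟪X ω, b⟫)|)
      (Continuous.continuousOn (by fun_prop)) hb
  refine ⟨?_, fun bφ hbφB _ hT1 hT2 => ?_⟩
  · simpa only [isMaxOn_iff] using hBcpt.existsUnique_isMaxOn_of_strictConcaveOn hBne
      (Qphi_continuousOn hX hY hφ hY01 henv hdom)
      (Qphi_strictConcaveOn hφconc hY01 (hBball ▸ convex_closedBall 0 R)
        (fun b hb => integrable_surrogateLoss hX hY hφ hY01 henv hdom hb) hndeg)
  have hsign : ∀ᵐ ω ∂P, (0 ≤ ⟪X ω, bφ⟫ ↔ 0 ≤ ⟪X ω, b₀⟫) := by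
    filter_upwards [hT2, hBayes₁] with ω h₁ h₂ using h₁.trans h₂
  have hpar : Parallel bφ b₀ := by_contra fun h => (hT1 bφ hbφB b₀ hb₀B h).ne' (ae_iff.1 hsign)
  obtain ⟨c, rfl⟩ := hpar.exists_eq_smul (ne_zero_of_measure_inner_neg_pos hBayes₂')
  refine ⟨⟨c, pos_of_ae_sign_smul_iff hBayes₂' hsign, rfl⟩, fun b _ => ?_⟩
  rw [Q0_congr_ae hsign]
  exact Q0_le_of_bayes hX hY hY01 hη hη01 hcond hBayes₁ b

theorem main_identification_theorem
    {Ω : Type*} [MeasurableSpace Ω] (P : Measure Ω) [IsProbabilityMeasure P]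
    {d : ℕ} (X : Ω → EuclideanSpace ℝ (Fin d)) (Y : Ω → ℝ)
    (η : EuclideanSpace ℝ (Fin d) → ℝ)
    (hX : Measurable X) (hY : Measurable Y) (hY01 : ∀ ω, Y ω = 0 ∨ Y ω = 1)
    (hη : Measurable η) (hη01 : ∀ x, η x ∈ Set.Icc (0 : ℝ) 1)
    (hcond : ∀ g : EuclideanSpace ℝ (Fin d) → ℝ, Measurable g → (∃ C, ∀ x, |g x| ≤ C) →
      ∫ ω, Y ω * g (X ω) ∂P = ∫ ω, η (X ω) * g (X ω) ∂P)
    (B : Set (EuclideanSpace ℝ (Fin d))) (hBne : B.Nonempty) (hBcpt : IsCompact B)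
    (b₀ : EuclideanSpace ℝ (Fin d)) (hb₀B : b₀ ∈ B)
    -- Assumption (Bayes boundary)
    (hBayes₁ : ∀ᵐ ω ∂P, ((1 : ℝ) / 2 ≤ η (X ω) ↔ 0 ≤ ⟪X ω, b₀⟫))
    (hBayes₂ : 0 < P {ω | 0 < ⟪X ω, b₀⟫}) (hBayes₂' : 0 < P {ω | ⟪X ω, b₀⟫ < 0})
    -- Assumption (surrogate score function)
    (φ : ℝ → ℝ) (hφconc : StrictConcaveOn ℝ Set.univ φ) (hφmono : StrictMono φ)
    (hφdiff : DifferentiableAt ℝ φ 0) (hφderiv : 0 < deriv φ 0)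
    -- regularity conditions
    (henv : Integrable (fun ω => ⨆ b ∈ B, (|φ (⟪X ω, b⟫)| + |φ (-⟪X ω, b⟫)|)) P)
    (R : ℝ) (hR : 0 < R) (hBball : B = Metric.closedBall (0 : EuclideanSpace ℝ (Fin d)) R)
    (hndeg : ∀ v : EuclideanSpace ℝ (Fin d), v ≠ 0 → 0 < P {ω | ⟪X ω, v⟫ ≠ 0}) :
    (∃! bφ, bφ ∈ B ∧ ∀ b ∈ B, Qphi P X Y φ b ≤ Qphi P X Y φ bφ) ∧
    (∀ bφ ∈ B, (∀ b ∈ B, Qphi P X Y φ b ≤ Qphi P X Y φ bφ) →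
      -- (T1)
      (∀ b₁ ∈ B, ∀ b₂ ∈ B, ¬ Parallel b₁ b₂ →
        0 < P {ω | ¬ ((0 ≤ ⟪X ω, b₁⟫) ↔ (0 ≤ ⟪X ω, b₂⟫))}) →
      -- (T2)
      (∀ᵐ ω ∂P, ((0 ≤ ⟪X ω, bφ⟫) ↔ ((1 : ℝ) / 2 ≤ η (X ω)))) →
      (∃ c : ℝ, 0 < c ∧ bφ = c • b₀) ∧ (∀ b ∈ B, Q0 P X Y b ≤ Q0 P X Y bφ)) :=
  main_identification_theorem_general P X Y η hX hY hY01 hη hη01 hcond B hBne hBcpt b₀ hb₀B hBayes₁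
    hBayes₂' φ hφconc henv R hBball hndeg
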